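/- There exists a constant c > 0 such that the following holds. Let d > 0, ψ ≥ 1, and let C be a dyadic cell with side(C) ≥ d/4. Then the number of dyadic cells Z for which there exists an axis-aligned square γ with side length in [d, ψ·d], storing cell Z, and C ⊆ γ, is at most c·(log₂ψ + 1). -/

import Mathlib

open Set

/-- A dyadic cell at level `level` (side length `2^level`) with lower-left corner
`(a·2^level, b·2^level)`. -/
structure DyadicCell where
  level : ℤ
  a : ℤ
  b : ℤ
deriving DecidableEq

/-- The side length of a dyadic cell. -/
noncomputable def DyadicCell.side (C : DyadicCell) : ℝ := 2 ^ C.level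

/-- The dyadic cell as a subset of the plane. -/
noncomputable def DyadicCell.toSet (C : DyadicCell) : Set (ℝ × ℝ) :=
  Set.Icc ((C.a : ℝ) * 2 ^ C.level) ((C.a + 1 : ℝ) * 2 ^ C.level) ×ˢ
    Set.Icc ((C.b : ℝ) * 2 ^ C.level) ((C.b + 1 : ℝ) * 2 ^ C.level)

/-- `5C`: the square obtained by scaling the cell `C` by a factor `5` about its center. -/
noncomputable def DyadicCell.scale5 (C : DyadicCell) : Set (ℝ × ℝ) :=
  Set.Icc ((C.a - 2 : ℝ) * 2 ^ C.level) ((C.a + 3 : ℝ) * 2 ^ C.level) ×ˢ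
    Set.Icc ((C.b - 2 : ℝ) * 2 ^ C.level) ((C.b + 3 : ℝ) * 2 ^ C.level)

/-- An axis-aligned square `[x, x+s] × [y, y+s]` of side length `s > 0`. -/
structure Square where
  x : ℝ
  y : ℝ
  s : ℝ
  s_pos : 0 < s

/-- The square as a subset of the plane. -/
noncomputable def Square.toSet (σ : Square) : Set (ℝ × ℝ) :=
  Set.Icc σ.x (σ.x + σ.s) ×ˢ Set.Icc σ.y (σ.y + σ.s)

/-- The center of a square. -/
noncomputable def Square.center (σ : Square) : ℝ × ℝ := (σ.x + σ.s / 2, σ.y + σ.s / 2)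

/-- `C` is a storing cell of `σ`: a dyadic cell of maximal side length among those that
contain the center of `σ` and are contained in `σ`. -/
def IsStoringCell (σ : Square) (C : DyadicCell) : Prop :=
  σ.center ∈ C.toSet ∧ C.toSet ⊆ σ.toSet ∧
    ∀ D : DyadicCell, σ.center ∈ D.toSet → D.toSet ⊆ σ.toSet → D.side ≤ C.side

-- Auxiliary lemmas

lemma two_zpow_pos (ℓ : ℤ) : (0:ℝ) < 2 ^ ℓ := zpow_pos (by norm_num) ℓ

lemma logb_two_zpow (ℓ : ℤ) : Real.logb 2 ((2:ℝ) ^ ℓ) = ℓ := by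
  rw [← Real.rpow_intCast, Real.logb_rpow two_pos (by norm_num)]

/-- If a dyadic cell is contained in a square, its corners give bounds. -/
lemma cell_subset_bounds {C : DyadicCell} {γ : Square} (h : C.toSet ⊆ γ.toSet) :
    γ.x ≤ (C.a : ℝ) * 2 ^ C.level ∧ ((C.a : ℝ) + 1) * 2 ^ C.level ≤ γ.x + γ.s ∧
    γ.y ≤ (C.b : ℝ) * 2 ^ C.level ∧ ((C.b : ℝ) + 1) * 2 ^ C.level ≤ γ.y + γ.s := by
  have t := two_zpow_pos C.level
  have h1 : ((C.a : ℝ) * 2 ^ C.level, (C.b : ℝ) * 2 ^ C.level) ∈ C.toSet := by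
    constructor <;> simp only [mem_Icc] <;> constructor <;> nlinarith
  have h2 : (((C.a : ℝ) + 1) * 2 ^ C.level, ((C.b : ℝ) + 1) * 2 ^ C.level) ∈ C.toSet := by
    constructor <;> simp only [mem_Icc] <;> constructor <;> nlinarith
  have g1 := h h1
  have g2 := h h2
  simp only [Square.toSet, mem_prod, mem_Icc] at g1 g2
  exact ⟨g1.1.1, g2.1.2, g1.2.1, g2.2.2⟩

lemma side_le_of_subset {C : DyadicCell} {γ : Square} (h : C.toSet ⊆ γ.toSet) :
    (2:ℝ) ^ C.level ≤ γ.s := by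
  obtain ⟨h1, h2, -, -⟩ := cell_subset_bounds h
  nlinarith [two_zpow_pos C.level]

/-- Lower bound on the side of a storing cell. -/
lemma storing_side_lb {γ : Square} {Z : DyadicCell} (h : IsStoringCell γ Z) :
    γ.s / 8 < Z.side := by
  set s := γ.s with hs
  have hs4 : (0:ℝ) < s / 4 := by linarith [γ.s_pos]
  set m : ℤ := ⌊Real.logb 2 (s / 4)⌋ with hm
  have key1 : (2:ℝ) ^ m ≤ s / 4 := by
    calc (2:ℝ) ^ m = (2:ℝ) ^ (m : ℝ) := (Real.rpow_intCast 2 m).symm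
      _ ≤ (2:ℝ) ^ Real.logb 2 (s / 4) :=
          Real.rpow_le_rpow_of_exponent_le one_le_two (Int.floor_le _)
      _ = s / 4 := Real.rpow_logb two_pos (by norm_num) hs4
  have key2 : s / 8 < (2:ℝ) ^ m := by
    have h1 : Real.logb 2 (s / 4) - 1 < (m : ℝ) := Int.sub_one_lt_floor _
    have h2 : (2:ℝ) ^ (Real.logb 2 (s / 4) - 1) < (2:ℝ) ^ (m : ℝ) :=
      Real.rpow_lt_rpow_of_exponent_lt one_lt_two h1
    rw [Real.rpow_sub two_pos, Real.rpow_one, Real.rpow_logb two_pos (by norm_num) hs4,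
      Real.rpow_intCast] at h2
    linarith
  have tpos := two_zpow_pos m
  set cx := γ.x + γ.s / 2 with hcx
  set cy := γ.y + γ.s / 2 with hcy
  set D : DyadicCell := ⟨m, ⌊cx / 2 ^ m⌋, ⌊cy / 2 ^ m⌋⟩ with hD
  have hfx1 : (⌊cx / 2 ^ m⌋ : ℝ) * 2 ^ m ≤ cx := by
    rw [← le_div_iff₀ tpos]; exact Int.floor_le _
  have hfx2 : cx ≤ ((⌊cx / 2 ^ m⌋ : ℝ) + 1) * 2 ^ m := by
    rw [← div_le_iff₀ tpos]; exact (Int.lt_floor_add_one _).le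
  have hfy1 : (⌊cy / 2 ^ m⌋ : ℝ) * 2 ^ m ≤ cy := by
    rw [← le_div_iff₀ tpos]; exact Int.floor_le _
  have hfy2 : cy ≤ ((⌊cy / 2 ^ m⌋ : ℝ) + 1) * 2 ^ m := by
    rw [← div_le_iff₀ tpos]; exact (Int.lt_floor_add_one _).le
  have hcenter : γ.center ∈ D.toSet := by
    simp only [Square.center, DyadicCell.toSet, hD, mem_prod, mem_Icc]
    exact ⟨⟨hfx1, hfx2⟩, ⟨hfy1, hfy2⟩⟩
  have hsub : D.toSet ⊆ γ.toSet := by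
    simp only [DyadicCell.toSet, Square.toSet, hD]
    apply Set.prod_mono <;> apply Set.Icc_subset_Icc <;> nlinarith
  have := h.2.2 D hcenter hsub
  simp only [DyadicCell.side, hD] at this
  calc s / 8 < (2:ℝ) ^ m := key2
    _ ≤ Z.side := this

theorem statement7 : ∃ c : ℝ, 0 < c ∧
    ∀ (d ψ : ℝ), 0 < d → 1 ≤ ψ →
    ∀ C : DyadicCell, d / 4 ≤ C.side →
      letI A : Set DyadicCell := {Z | ∃ γ : Square, d ≤ γ.s ∧ γ.s ≤ ψ * d ∧
        IsStoringCell γ Z ∧ C.toSet ⊆ γ.toSet}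
      A.Finite ∧ (A.ncard : ℝ) ≤ c * (Real.logb 2 ψ + 1) := by
  refine ⟨1444, by norm_num, ?_⟩
  intro d ψ hd hψ C hC
  set A : Set DyadicCell := {Z | ∃ γ : Square, d ≤ γ.s ∧ γ.s ≤ ψ * d ∧
    IsStoringCell γ Z ∧ C.toSet ⊆ γ.toSet} with hA
  -- reference point: lower-left corner of C
  set p1 : ℝ := (C.a : ℝ) * 2 ^ C.level with hp1
  set p2 : ℝ := (C.b : ℝ) * 2 ^ C.level with hp2
  set ℓlo : ℤ := ⌊Real.logb 2 d⌋ - 2 with hℓlo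
  set ℓhi : ℤ := ⌊Real.logb 2 (ψ * d)⌋ with hℓhi
  set f : DyadicCell → ℤ × ℤ × ℤ :=
    fun Z => (Z.level, Z.a - ⌊p1 / 2 ^ Z.level⌋, Z.b - ⌊p2 / 2 ^ Z.level⌋) with hf
  have hfinj : Function.Injective f := by
    intro Z W hZW
    simp only [hf, Prod.mk.injEq] at hZW
    obtain ⟨h1, h2, h3⟩ := hZW
    cases Z; cases W
    simp_all
  set T : Finset (ℤ × ℤ × ℤ) :=
    Finset.Icc ℓlo ℓhi ×ˢ (Finset.Icc (-9) 9 ×ˢ Finset.Icc (-9) 9) with hT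
  have hmem : ∀ Z ∈ A, f Z ∈ T := by
    rintro Z ⟨γ, hγ1, hγ2, hst, hCγ⟩
    have tpos := two_zpow_pos Z.level
    have hside1 : γ.s / 8 < (2:ℝ) ^ Z.level := storing_side_lb hst
    have hside2 : (2:ℝ) ^ Z.level ≤ γ.s := side_le_of_subset hst.2.1
    -- level bounds
    have hlev1 : ℓlo ≤ Z.level := by
      have h1 : Real.logb 2 d < (Z.level : ℝ) + 3 := by
        have : d < (2:ℝ) ^ (Z.level + 3) := by
          rw [zpow_add₀ (two_ne_zero)]
          norm_num
          nlinarith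
        have := Real.logb_lt_logb one_lt_two hd this
        rwa [logb_two_zpow, Int.cast_add, Int.cast_ofNat] at this
      have h2 : (⌊Real.logb 2 d⌋ : ℝ) < (Z.level : ℝ) + 3 :=
        lt_of_le_of_lt (Int.floor_le _) h1
      have h3 : ⌊Real.logb 2 d⌋ < Z.level + 3 := by exact_mod_cast h2
      omega
    have hlev2 : Z.level ≤ ℓhi := by
      have hψd : (0:ℝ) < ψ * d := by nlinarith
      have h1 : (Z.level : ℝ) ≤ Real.logb 2 (ψ * d) := by
        have h2 : (2:ℝ) ^ Z.level ≤ ψ * d := le_trans hside2 hγ2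
        have := (Real.logb_le_logb one_lt_two tpos hψd).mpr h2
        rwa [logb_two_zpow] at this
      exact Int.le_floor.mpr h1
    -- position bounds
    obtain ⟨hZx1, hZx2, hZy1, hZy2⟩ := cell_subset_bounds hst.2.1
    obtain ⟨hCx1, hCx2, hCy1, hCy2⟩ := cell_subset_bounds hCγ
    have hp1lb : γ.x ≤ p1 := hCx1
    have hp1ub : p1 ≤ γ.x + γ.s := by
      have := two_zpow_pos C.level
      nlinarith
    have hp2lb : γ.y ≤ p2 := hCy1
    have hp2ub : p2 ≤ γ.y + γ.s := by
      have := two_zpow_pos C.level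
      nlinarith
    have hF1a : (⌊p1 / 2 ^ Z.level⌋ : ℝ) * 2 ^ Z.level ≤ p1 := by
      rw [← le_div_iff₀ tpos]; exact Int.floor_le _
    have hF1b : p1 < ((⌊p1 / 2 ^ Z.level⌋ : ℝ) + 1) * 2 ^ Z.level := by
      rw [← div_lt_iff₀ tpos]; exact Int.lt_floor_add_one _
    have hF2a : (⌊p2 / 2 ^ Z.level⌋ : ℝ) * 2 ^ Z.level ≤ p2 := by
      rw [← le_div_iff₀ tpos]; exact Int.floor_le _
    have hF2b : p2 < ((⌊p2 / 2 ^ Z.level⌋ : ℝ) + 1) * 2 ^ Z.level := by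
      rw [← div_lt_iff₀ tpos]; exact Int.lt_floor_add_one _
    have hs8 : γ.s < 8 * (2:ℝ) ^ Z.level := by linarith
    -- Z.a bounds
    have ha1 : (⌊p1 / 2 ^ Z.level⌋ : ℝ) - 9 < (Z.a : ℝ) :=
      (mul_lt_mul_iff_of_pos_right tpos).mp (by linarith)
    have ha2 : (Z.a : ℝ) < (⌊p1 / 2 ^ Z.level⌋ : ℝ) + 9 :=
      (mul_lt_mul_iff_of_pos_right tpos).mp (by linarith)
    have hb1 : (⌊p2 / 2 ^ Z.level⌋ : ℝ) - 9 < (Z.b : ℝ) :=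
      (mul_lt_mul_iff_of_pos_right tpos).mp (by linarith)
    have hb2 : (Z.b : ℝ) < (⌊p2 / 2 ^ Z.level⌋ : ℝ) + 9 :=
      (mul_lt_mul_iff_of_pos_right tpos).mp (by linarith)
    have ha1' : ⌊p1 / 2 ^ Z.level⌋ - 9 < Z.a := by exact_mod_cast ha1
    have ha2' : Z.a < ⌊p1 / 2 ^ Z.level⌋ + 9 := by exact_mod_cast ha2
    have hb1' : ⌊p2 / 2 ^ Z.level⌋ - 9 < Z.b := by exact_mod_cast hb1
    have hb2' : Z.b < ⌊p2 / 2 ^ Z.level⌋ + 9 := by exact_mod_cast hb2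
    simp only [hT, hf, Finset.mem_product, Finset.mem_Icc]
    refine ⟨⟨hlev1, hlev2⟩, ⟨by omega, by omega⟩, ⟨by omega, by omega⟩⟩
  have himg : f '' A ⊆ (T : Set (ℤ × ℤ × ℤ)) := by
    rintro _ ⟨Z, hZ, rfl⟩
    exact hmem Z hZ
  have hfin : A.Finite :=
    Set.Finite.of_finite_image (T.finite_toSet.subset himg) hfinj.injOn
  refine ⟨hfin, ?_⟩
  -- cardinality
  have hcard : A.ncard ≤ T.card := by
    rw [← Set.ncard_image_of_injective A hfinj]
    calc (f '' A).ncard ≤ (T : Set (ℤ × ℤ × ℤ)).ncard :=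
          Set.ncard_le_ncard himg T.finite_toSet
      _ = T.card := Set.ncard_coe_finset T
  have hTcard : T.card = (ℓhi + 1 - ℓlo).toNat * 361 := by
    simp only [hT, Finset.card_product, Int.card_Icc]
    have h19 : ((9:ℤ) + 1 - (-9)).toNat = 19 := rfl
    rw [h19]
  -- bound the number of levels
  have hψpos : (0:ℝ) < ψ := lt_of_lt_of_le one_pos hψ
  have hlogψ : 0 ≤ Real.logb 2 ψ := Real.logb_nonneg one_lt_two hψ
  have hNle : ((ℓhi + 1 - ℓlo : ℤ) : ℝ) ≤ Real.logb 2 ψ + 4 := by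
    have h1 : (⌊Real.logb 2 (ψ * d)⌋ : ℝ) ≤ Real.logb 2 ψ + Real.logb 2 d := by
      rw [← Real.logb_mul (ne_of_gt hψpos) (ne_of_gt hd)]
      exact Int.floor_le _
    have h2 : Real.logb 2 d - 1 < (⌊Real.logb 2 d⌋ : ℝ) := Int.sub_one_lt_floor _
    push_cast
    simp only [hℓhi, hℓlo]
    push_cast
    linarith
  have hNnonneg : 0 ≤ ℓhi + 1 - ℓlo := by
    have h1 : ⌊Real.logb 2 d⌋ ≤ ⌊Real.logb 2 (ψ * d)⌋ := by
      apply Int.floor_le_floor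
      apply Real.logb_le_logb_of_le one_lt_two hd
      nlinarith
    omega
  have hNreal : ((ℓhi + 1 - ℓlo).toNat : ℝ) ≤ Real.logb 2 ψ + 4 := by
    have hcast : ((ℓhi + 1 - ℓlo).toNat : ℝ) = ((ℓhi + 1 - ℓlo : ℤ) : ℝ) := by
      exact_mod_cast Int.toNat_of_nonneg hNnonneg
    rw [hcast]
    exact hNle
  calc (A.ncard : ℝ) ≤ (T.card : ℝ) := by exact_mod_cast hcard
    _ = ((ℓhi + 1 - ℓlo).toNat : ℝ) * 361 := by rw [hTcard]; push_cast; ring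
    _ ≤ (Real.logb 2 ψ + 4) * 361 := by nlinarith
    _ ≤ 1444 * (Real.logb 2 ψ + 1) := by nlinarith
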